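/- Let X be a normal Hausdorff space, let F be a cusco map from X to ℝ, and let W ⊆ X × ℝ be an open set such that the graph of F is contained in W. Then there exists a continuous function g : X → ℝ whose graph is contained in W. -/

import Mathlib

open Set Topology TopologicalSpace

/-- The set of values of a set-valued map (identified with its graph) at a point. -/
def valuesAt {X : Type*} (F : Set (X × ℝ)) (x : X) : Set ℝ := {y | (x, y) ∈ F}

/-- A set-valued map (identified with its graph) is cusco: upper semicontinuous at every
point, with nonempty compact convex values. -/
def IsCusco {X : Type*} [TopologicalSpace X] (F : Set (X × ℝ)) : Prop :=
  (∀ x : X, ∀ V : Set ℝ, IsOpen V → valuesAt F x ⊆ V →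
    ∃ U : Set X, IsOpen U ∧ x ∈ U ∧ ∀ u ∈ U, valuesAt F u ⊆ V) ∧
  (∀ x : X, (valuesAt F x).Nonempty ∧ IsCompact (valuesAt F x) ∧ Convex ℝ (valuesAt F x))

/-- A minimal cusco map, i.e. a cusco map containing no proper cusco submap. -/
def IsMinimalCusco {X : Type*} [TopologicalSpace X] (F : Set (X × ℝ)) : Prop :=
  IsCusco F ∧ ∀ G : Set (X × ℝ), IsCusco G → G ⊆ F → G = F

/-- `L(X)`: all cusco maps from `X` to `ℝ`. -/
def LSet (X : Type*) [TopologicalSpace X] : Set (Set (X × ℝ)) := {F | IsCusco F}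

/-- `L₀(X)`: cusco maps that are single-valued at each isolated point. -/
def L0Set (X : Type*) [TopologicalSpace X] : Set (Set (X × ℝ)) :=
  {F | IsCusco F ∧ ∀ x : X, IsOpen ({x} : Set X) → ∃ y : ℝ, valuesAt F x = {y}}

/-- `MC(X)`: all minimal cusco maps from `X` to `ℝ`. -/
def MCSet (X : Type*) [TopologicalSpace X] : Set (Set (X × ℝ)) := {F | IsMinimalCusco F}

/-- The upper Vietoris topology on a family of subsets of `X × ℝ`. -/
def upperVietoris {X : Type*} [TopologicalSpace X] (S : Set (Set (X × ℝ))) :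
    TopologicalSpace S :=
  .generateFrom {U | ∃ W : Set (X × ℝ), IsOpen W ∧ U = {A : S | (A : Set (X × ℝ)) ⊆ W}}

/-- The Vietoris topology on a family of subsets of `X × ℝ`. -/
def vietoris {X : Type*} [TopologicalSpace X] (S : Set (Set (X × ℝ))) :
    TopologicalSpace S :=
  .generateFrom
    ({U | ∃ W : Set (X × ℝ), IsOpen W ∧ U = {A : S | (A : Set (X × ℝ)) ⊆ W}} ∪
     {U | ∃ W : Set (X × ℝ), IsOpen W ∧ U = {A : S | ((A : Set (X × ℝ)) ∩ W).Nonempty}})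

/-- The graph of a function `X → ℝ`. -/
def graphOf {X : Type*} (f : X → ℝ) : Set (X × ℝ) := {p | p.2 = f p.1}

/-- `X` is countably compact: every countable open cover has a finite subcover. -/
def CountablyCompact (X : Type*) [TopologicalSpace X] : Prop :=
  ∀ U : ℕ → Set X, (∀ n, IsOpen (U n)) → (⋃ n, U n) = Set.univ →
    ∃ t : Finset ℕ, (⋃ n ∈ t, U n) = Set.univ

/-! Around each point `x` the compact interval `F x` lies in a box `U ×ˢ Ioo a b ⊆ W` over a
neighbourhood `U` of `x` that still contains `F` over all of `U` (tube lemma and upper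
semicontinuity of `F`). The infimum of the lower ends and the supremum of the upper ends of such
boxes are an upper semicontinuous `w` and a lower semicontinuous `v` with `w < F < v` and
`{(x, y) | w x < y < v x} ⊆ W`. As `sSup F` is upper and `sInf F` lower semicontinuous, the
Katětov–Tong insertion theorem gives a continuous `g` with `w + sSup F ≤ g ≤ sInf F + v`, and then
`w < g / 2 < v`. The suprema and the insertion theorem need `W` to be bounded in the second
coordinate, which is arranged by transporting `F` and `W` along an order isomorphism
`ℝ ≃ Ioo (-1) 1`. -/

open Filter
open scoped BoundedContinuousFunction

section KatetovTong

variable {X : Type*} [TopologicalSpace X] [NormalSpace X] {u v : X → ℝ}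

theorem katetov_tong_step (hu : UpperSemicontinuous u) (hv : LowerSemicontinuous v) (huv : u ≤ v)
    {ε : ℝ} (hε : 0 < ε) (G : X →ᵇ ℝ) (hG : ∀ x, u x - ε ≤ G x ∧ G x ≤ v x + ε) :
    ∃ G' : X →ᵇ ℝ, dist G' G ≤ ε / 3 ∧
      ∀ x, u x - 2 * ε / 3 ≤ G' x ∧ G' x ≤ v x + 2 * ε / 3 := by
  have hs : IsClosed ((fun x => v x + -G x) ⁻¹' Iic (-(ε / 3))) :=
    (hv.add G.continuous.neg.lowerSemicontinuous).isClosed_preimage _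
  have ht : IsClosed ((fun x => u x + -G x) ⁻¹' Ici (ε / 3)) :=
    (hu.add G.continuous.neg.upperSemicontinuous).isClosed_preimage _
  have hst : Disjoint ((fun x => v x + -G x) ⁻¹' Iic (-(ε / 3)))
      ((fun x => u x + -G x) ⁻¹' Ici (ε / 3)) :=
    disjoint_left.2 fun x hxs hxt => by
      simp only [mem_preimage, mem_Iic, mem_Ici] at hxs hxt
      linarith [huv x]
  obtain ⟨f, hf0, hf1, hf01⟩ := exists_bounded_zero_one_of_closed hs ht hst
  have hG' (x : X) :
      (G + (ε / 3) • (2 • f - 1) : X →ᵇ ℝ) x = G x + ε / 3 * (2 * f x - 1) := by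
    simp [two_mul]
  refine ⟨G + (ε / 3) • (2 • f - 1), (BoundedContinuousFunction.dist_le (by positivity)).2
    fun x => ?_, fun x => ?_⟩
  · rw [Real.dist_eq, hG', abs_le]
    constructor <;> nlinarith [(hf01 x).1, (hf01 x).2]
  · rw [hG']
    obtain ⟨hf0x, hf1x⟩ := hf01 x
    constructor
    · by_cases hx : ε / 3 ≤ u x + -G x
      · rw [hf1 hx, Pi.one_apply]; linarith [(hG x).1]
      · nlinarith
    · by_cases hx : v x + -G x ≤ -(ε / 3)
      · rw [hf0 hx, Pi.zero_apply]; linarith [(hG x).2]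
      · nlinarith

theorem katetov_tong_seq (hu : UpperSemicontinuous u) (hv : LowerSemicontinuous v) (huv : u ≤ v)
    {M : ℝ} (hM : 0 < M) (hMu : ∀ x, u x ≤ M) (hMv : ∀ x, -M ≤ v x) :
    ∃ G : ℕ → X →ᵇ ℝ, (∀ n x, u x - M * (2 / 3) ^ n ≤ G n x ∧ G n x ≤ v x + M * (2 / 3) ^ n) ∧
      ∀ n, dist (G n) (G (n + 1)) ≤ M / 3 * (2 / 3) ^ n := by
  let Approx (n : ℕ) (G : X →ᵇ ℝ) : Prop :=
    ∀ x, u x - M * (2 / 3) ^ n ≤ G x ∧ G x ≤ v x + M * (2 / 3) ^ n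
  have step (n : ℕ) (G : X →ᵇ ℝ) (hG : Approx n G) :
      ∃ G', Approx (n + 1) G' ∧ dist G G' ≤ M / 3 * (2 / 3) ^ n := by
    obtain ⟨G', hdist, hG'⟩ := katetov_tong_step hu hv huv (by positivity) G hG
    refine ⟨G', fun x => ?_, by rw [dist_comm]; linarith⟩
    rw [pow_succ]
    constructor <;> linarith [hG' x]
  choose! next hnext hdist using step
  let G (n : ℕ) : X →ᵇ ℝ := Nat.rec 0 next n
  have hG (n : ℕ) : Approx n (G n) := by
    induction n with
    | zero => exact fun x => ⟨by simpa [G] using hMu x, by simp [G]; linarith [hMv x]⟩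
    | succ n ih => exact hnext n (G n) ih
  exact ⟨G, hG, fun n => hdist n (G n) (hG n)⟩

theorem exists_continuous_forall_mem_Icc_of_semicontinuous (hu : UpperSemicontinuous u)
    (hv : LowerSemicontinuous v) (huv : u ≤ v) (hu_bdd : BddAbove (range u))
    (hv_bdd : BddBelow (range v)) :
    ∃ g : X → ℝ, Continuous g ∧ ∀ x, g x ∈ Icc (u x) (v x) := by
  obtain ⟨M₁, hM₁⟩ := hu_bdd
  obtain ⟨M₂, hM₂⟩ := hv_bdd
  set M := max (max M₁ (-M₂)) 1
  obtain ⟨G, hG, hdist⟩ := katetov_tong_seq hu hv huv (M := M) (by positivity)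
    (fun x => (hM₁ ⟨x, rfl⟩).trans ((le_max_left _ _).trans (le_max_left _ _)))
    (fun x => by linarith [hM₂ ⟨x, rfl⟩, (le_max_right M₁ (-M₂)).trans (le_max_left _ 1)])
  obtain ⟨g, hg⟩ := cauchySeq_tendsto_of_complete
    (cauchySeq_of_le_geometric _ _ (by norm_num) hdist)
  refine ⟨g, g.continuous, fun x => ?_⟩
  have hGx : Tendsto (fun n => G n x) atTop (𝓝 (g x)) :=
    (BoundedContinuousFunction.tendsto_iff_tendstoUniformly.1 hg).tendsto_at x
  have hε : Tendsto (fun n => M * (2 / 3 : ℝ) ^ n) atTop (𝓝 0) := by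
    simpa using (tendsto_pow_atTop_nhds_zero_of_lt_one (by norm_num) (by norm_num)).const_mul M
  exact ⟨le_of_tendsto_of_tendsto' (by simpa using tendsto_const_nhds.sub hε) hGx
      fun n => (hG n x).1,
    le_of_tendsto_of_tendsto' hGx (by simpa using tendsto_const_nhds.add hε) fun n => (hG n x).2⟩

end KatetovTong

theorem lowerSemicontinuous_sSup_of_eventually_mem {X β : Type*} [TopologicalSpace X]
    [ConditionallyCompleteLinearOrder β] {S : X → Set β}
    (hS : ∀ x, ∀ b ∈ S x, ∀ᶠ x' in 𝓝 x, b ∈ S x') (hne : ∀ x, (S x).Nonempty)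
    (hbdd : ∀ x, BddAbove (S x)) :
    LowerSemicontinuous fun x => sSup (S x) := by
  intro x c hc
  obtain ⟨b, hb, hcb⟩ := exists_lt_of_lt_csSup (hne x) hc
  filter_upwards [hS x b hb] with x' hx'
  exact hcb.trans_le (le_csSup (hbdd x') hx')

theorem upperSemicontinuous_sInf_of_eventually_mem {X β : Type*} [TopologicalSpace X]
    [ConditionallyCompleteLinearOrder β] {S : X → Set β}
    (hS : ∀ x, ∀ b ∈ S x, ∀ᶠ x' in 𝓝 x, b ∈ S x') (hne : ∀ x, (S x).Nonempty)
    (hbdd : ∀ x, BddBelow (S x)) :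
    UpperSemicontinuous fun x => sInf (S x) :=
  lowerSemicontinuous_sSup_of_eventually_mem (β := βᵒᵈ) hS hne hbdd

theorem IsCompact.exists_Ioo_between {K V : Set ℝ} (hK : IsCompact K) (hne : K.Nonempty)
    (hKc : K.OrdConnected) (hV : IsOpen V) (hKV : K ⊆ V) :
    ∃ a b, K ⊆ Ioo a b ∧ Ioo a b ⊆ V := by
  have hq := hK.sInf_mem hne
  have hp := hK.sSup_mem hne
  obtain ⟨a, ha, haV⟩ := exists_Ioc_subset_of_mem_nhds (hV.mem_nhds (hKV hq)) (exists_lt _)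
  obtain ⟨b, hb, hbV⟩ := exists_Ico_subset_of_mem_nhds (hV.mem_nhds (hKV hp)) (exists_gt _)
  refine ⟨a, b, fun y hy => ⟨ha.trans_le (csInf_le hK.bddBelow hy),
    (le_csSup hK.bddAbove hy).trans_lt hb⟩, fun y hy => ?_⟩
  rcases le_or_gt y (sInf K) with hyq | hyq
  · exact haV ⟨hy.1, hyq⟩
  rcases le_or_gt y (sSup K) with hyp | hyp
  · exact hKV (hKc.out hq hp ⟨hyq.le, hyp⟩)
  · exact hbV ⟨hyp.le, hy.2⟩

theorem graphOf_subset_iff {X : Type*} {g : X → ℝ} {W : Set (X × ℝ)} :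
    graphOf g ⊆ W ↔ ∀ x, (x, g x) ∈ W :=
  ⟨fun h x => h rfl, fun h p hp => by rw [show p = (p.1, g p.1) from Prod.ext rfl hp]; exact h _⟩

theorem valuesAt_image_prodMap {X : Type*} (φ : ℝ → ℝ) (F : Set (X × ℝ)) (x : X) :
    valuesAt (Prod.map id φ '' F) x = φ '' valuesAt F x := by
  ext y
  constructor
  · rintro ⟨⟨x', t⟩, ht, hxy⟩
    obtain ⟨rfl, rfl⟩ := Prod.ext_iff.1 hxy
    exact ⟨t, ht, rfl⟩
  · rintro ⟨t, ht, rfl⟩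
    exact ⟨(x, t), ht, rfl⟩

section

variable {X : Type*} [TopologicalSpace X] {F W : Set (X × ℝ)}

namespace IsCusco

theorem upperSemicontinuous_sSup (hF : IsCusco F) :
    UpperSemicontinuous fun x => sSup (valuesAt F x) := by
  intro x c hc
  obtain ⟨U, hU, hxU, hUF⟩ := hF.1 x (Iio c) isOpen_Iio
    fun y hy => (le_csSup (hF.2 x).2.1.bddAbove hy).trans_lt hc
  filter_upwards [hU.mem_nhds hxU] with x' hx'
  exact hUF x' hx' ((hF.2 x').2.1.sSup_mem (hF.2 x').1)

theorem lowerSemicontinuous_sInf (hF : IsCusco F) :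
    LowerSemicontinuous fun x => sInf (valuesAt F x) := by
  intro x c hc
  obtain ⟨U, hU, hxU, hUF⟩ := hF.1 x (Ioi c) isOpen_Ioi
    fun y hy => hc.trans_le (csInf_le (hF.2 x).2.1.bddBelow hy)
  filter_upwards [hU.mem_nhds hxU] with x' hx'
  exact hUF x' hx' ((hF.2 x').2.1.sInf_mem (hF.2 x').1)

theorem exists_continuous_lt_lt [NormalSpace X] (hF : IsCusco F) {w v : X → ℝ}
    (hw : UpperSemicontinuous w) (hv : LowerSemicontinuous v)
    (hwFv : ∀ x, ∀ y ∈ valuesAt F x, w x < y ∧ y < v x)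
    (hw_bdd : BddBelow (range w)) (hv_bdd : BddAbove (range v)) :
    ∃ g : X → ℝ, Continuous g ∧ ∀ x, w x < g x ∧ g x < v x := by
  have hq x := hwFv x _ ((hF.2 x).2.1.sInf_mem (hF.2 x).1)
  have hp x := hwFv x _ ((hF.2 x).2.1.sSup_mem (hF.2 x).1)
  obtain ⟨m, hm⟩ := hw_bdd
  obtain ⟨M, hM⟩ := hv_bdd
  obtain ⟨g, hg, hgF⟩ := exists_continuous_forall_mem_Icc_of_semicontinuous
    (hw.add hF.upperSemicontinuous_sSup) (hF.lowerSemicontinuous_sInf.add hv)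
    (fun x => add_le_add (hq x).1.le (hp x).2.le)
    ⟨2 * M, forall_mem_range.2 fun x => by linarith [hp x, hM ⟨x, rfl⟩]⟩
    ⟨2 * m, forall_mem_range.2 fun x => by linarith [hq x, hm ⟨x, rfl⟩]⟩
  refine ⟨fun x => g x / 2, hg.div_const 2, fun x => ?_⟩
  have := hgF x
  constructor <;> linarith [hq x, hp x, this.1, this.2]

theorem image_prodMap {φ : ℝ → ℝ} (hφ : Continuous φ) (hF : IsCusco F) :
    IsCusco (Prod.map id φ '' F) := by
  refine ⟨fun x V hV hFV => ?_, fun x => ?_⟩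
  · rw [valuesAt_image_prodMap, image_subset_iff] at hFV
    obtain ⟨U, hU, hxU, hUF⟩ := hF.1 x _ (hV.preimage hφ) hFV
    exact ⟨U, hU, hxU, fun u hu => by
      rw [valuesAt_image_prodMap, image_subset_iff]; exact hUF u hu⟩
  · obtain ⟨hne, hK, hconv⟩ := hF.2 x
    rw [valuesAt_image_prodMap]
    exact ⟨hne.image φ, hK.image hφ, (hconv.isPreconnected.image φ hφ.continuousOn).convex⟩

end IsCusco

def IsTubeAt (F W : Set (X × ℝ)) (x : X) (a b : ℝ) : Prop :=
  ∃ U ∈ 𝓝 x, U ×ˢ Ioo a b ⊆ W ∧ ∀ u ∈ U, valuesAt F u ⊆ Ioo a b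

namespace IsTubeAt

variable {x : X} {a b : ℝ}

theorem eventually (h : IsTubeAt F W x a b) : ∀ᶠ x' in 𝓝 x, IsTubeAt F W x' a b := by
  obtain ⟨U, hU, hUW, hUF⟩ := h
  filter_upwards [eventually_mem_nhds_iff.2 hU] with x' hx'
  exact ⟨U, hx', hUW, hUF⟩

theorem valuesAt_subset (h : IsTubeAt F W x a b) : valuesAt F x ⊆ Ioo a b :=
  h.choose_spec.2.2 x (mem_of_mem_nhds h.choose_spec.1)

theorem mk_mem (h : IsTubeAt F W x a b) {y : ℝ} (hy : y ∈ Ioo a b) : (x, y) ∈ W :=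
  h.choose_spec.2.1 ⟨mem_of_mem_nhds h.choose_spec.1, hy⟩

-- Both intervals contain `F x ≠ ∅`, so their union is the interval `(a, b')`.
theorem mk_mem_of_lt_of_lt {a' b' y : ℝ} (h : IsTubeAt F W x a b) (h' : IsTubeAt F W x a' b')
    (hF : (valuesAt F x).Nonempty) (hay : a < y) (hyb' : y < b') : (x, y) ∈ W := by
  obtain ⟨f, hf⟩ := hF
  rcases lt_or_ge y b with hyb | hby
  · exact h.mk_mem ⟨hay, hyb⟩
  · exact h'.mk_mem ⟨((h'.valuesAt_subset hf).1.trans (h.valuesAt_subset hf).2).trans_le hby,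
      hyb'⟩

theorem le_of_mem_upperBounds (h : IsTubeAt F W x a b) (hF : (valuesAt F x).Nonempty) {M : ℝ}
    (hM : M ∈ upperBounds (Prod.snd '' W)) : b ≤ M := by
  obtain ⟨f, hf⟩ := hF
  have hab : a < b := (h.valuesAt_subset hf).1.trans (h.valuesAt_subset hf).2
  rw [← csSup_Ioo hab]
  exact csSup_le (nonempty_Ioo.2 hab) fun y hy => hM ⟨(x, y), h.mk_mem hy, rfl⟩

theorem ge_of_mem_lowerBounds (h : IsTubeAt F W x a b) (hF : (valuesAt F x).Nonempty) {m : ℝ}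
    (hm : m ∈ lowerBounds (Prod.snd '' W)) : m ≤ a := by
  obtain ⟨f, hf⟩ := hF
  have hab : a < b := (h.valuesAt_subset hf).1.trans (h.valuesAt_subset hf).2
  rw [← csInf_Ioo hab]
  exact le_csInf (nonempty_Ioo.2 hab) fun y hy => hm ⟨(x, y), h.mk_mem hy, rfl⟩

end IsTubeAt

namespace IsCusco

theorem exists_isTubeAt (hF : IsCusco F) (hW : IsOpen W) (hFW : F ⊆ W) (x : X) :
    ∃ a b, IsTubeAt F W x a b := by
  obtain ⟨hne, hK, hconv⟩ := hF.2 x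
  obtain ⟨U, V, hU, hV, hxU, hFV, hUV⟩ := generalized_tube_lemma isCompact_singleton hK hW
    (by rintro ⟨x', y⟩ ⟨rfl, hy⟩; exact hFW hy)
  obtain ⟨a, b, hFab, habV⟩ := hK.exists_Ioo_between hne hconv.ordConnected hV hFV
  obtain ⟨U', hU', hxU', hU'F⟩ := hF.1 x (Ioo a b) isOpen_Ioo hFab
  exact ⟨a, b, U ∩ U', inter_mem (hU.mem_nhds (hxU rfl)) (hU'.mem_nhds hxU'),
    fun p hp => hUV ⟨hp.1.1, habV hp.2⟩, fun u hu => hU'F u hu.2⟩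

theorem exists_semicontinuous_band (hF : IsCusco F) (hW : IsOpen W) (hFW : F ⊆ W)
    (hWb : Bornology.IsBounded (Prod.snd '' W)) :
    ∃ w v : X → ℝ, UpperSemicontinuous w ∧ LowerSemicontinuous v ∧
      (∀ x, ∀ y ∈ valuesAt F x, w x < y ∧ y < v x) ∧ BddBelow (range w) ∧ BddAbove (range v) ∧
      ∀ x y, w x < y → y < v x → (x, y) ∈ W := by
  obtain ⟨m, hm⟩ := hWb.bddBelow
  obtain ⟨M, hM⟩ := hWb.bddAbove
  set lowerEnds : X → Set ℝ := fun x => {a | ∃ b, IsTubeAt F W x a b}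
  set upperEnds : X → Set ℝ := fun x => {b | ∃ a, IsTubeAt F W x a b}
  have hlow_ne x : (lowerEnds x).Nonempty :=
    let ⟨a, b, h⟩ := hF.exists_isTubeAt hW hFW x; ⟨a, b, h⟩
  have hup_ne x : (upperEnds x).Nonempty :=
    let ⟨a, b, h⟩ := hF.exists_isTubeAt hW hFW x; ⟨b, a, h⟩
  have hlow_bdd x : m ∈ lowerBounds (lowerEnds x) :=
    fun _ ⟨_, h⟩ => h.ge_of_mem_lowerBounds (hF.2 x).1 hm
  have hup_bdd x : M ∈ upperBounds (upperEnds x) :=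
    fun _ ⟨_, h⟩ => h.le_of_mem_upperBounds (hF.2 x).1 hM
  refine ⟨fun x => sInf (lowerEnds x), fun x => sSup (upperEnds x),
    upperSemicontinuous_sInf_of_eventually_mem (fun x a ⟨b, h⟩ => h.eventually.mono
      fun _ h' => ⟨b, h'⟩) hlow_ne fun x => ⟨m, hlow_bdd x⟩,
    lowerSemicontinuous_sSup_of_eventually_mem (fun x b ⟨a, h⟩ => h.eventually.mono
      fun _ h' => ⟨a, h'⟩) hup_ne fun x => ⟨M, hup_bdd x⟩,
    fun x y hy => ?_, ⟨m, forall_mem_range.2 fun x => le_csInf (hlow_ne x) (hlow_bdd x)⟩,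
    ⟨M, forall_mem_range.2 fun x => csSup_le (hup_ne x) (hup_bdd x)⟩, fun x y hwy hyv => ?_⟩
  · obtain ⟨a, b, h⟩ := hF.exists_isTubeAt hW hFW x
    exact ⟨(csInf_le ⟨m, hlow_bdd x⟩ ⟨b, h⟩).trans_lt (h.valuesAt_subset hy).1,
      (h.valuesAt_subset hy).2.trans_le (le_csSup ⟨M, hup_bdd x⟩ ⟨a, h⟩)⟩
  · obtain ⟨a, ⟨b, h⟩, hay⟩ := exists_lt_of_csInf_lt (hlow_ne x) hwy
    obtain ⟨b', ⟨a', h'⟩, hyb'⟩ := exists_lt_of_lt_csSup (hup_ne x) hyv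
    exact h.mk_mem_of_lt_of_lt h' (hF.2 x).1 hay hyb'

end IsCusco

theorem exists_continuous_graph_subset_of_isBounded [NormalSpace X] (hF : IsCusco F)
    (hW : IsOpen W) (hFW : F ⊆ W) (hWb : Bornology.IsBounded (Prod.snd '' W)) :
    ∃ g : X → ℝ, Continuous g ∧ graphOf g ⊆ W := by
  obtain ⟨w, v, hw, hv, hwFv, hw_bdd, hv_bdd, hband⟩ := hF.exists_semicontinuous_band hW hFW hWb
  obtain ⟨g, hg, hwgv⟩ := hF.exists_continuous_lt_lt hw hv hwFv hw_bdd hv_bdd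
  exact ⟨g, hg, graphOf_subset_iff.2 fun x => hband x _ (hwgv x).1 (hwgv x).2⟩

theorem exists_continuous_graph_subset_of_image_prodMap {φ : ℝ → ℝ} (hφ : IsEmbedding φ)
    {g' : X → ℝ} (hg' : Continuous g') (hg'W : graphOf g' ⊆ Prod.map id φ '' W) :
    ∃ g : X → ℝ, Continuous g ∧ graphOf g ⊆ W := by
  have hg'φ x : ∃ t, (x, t) ∈ W ∧ φ t = g' x := by
    obtain ⟨⟨x', t⟩, ht, hxt⟩ := graphOf_subset_iff.1 hg'W x
    obtain ⟨rfl, h⟩ := Prod.ext_iff.1 hxt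
    exact ⟨t, ht, h⟩
  choose g hgW hφg using hg'φ
  refine ⟨g, hφ.continuous_iff.2 ?_, graphOf_subset_iff.2 hgW⟩
  simpa only [Function.comp_def, hφg] using hg'

end

theorem exists_continuous_graph_subset_general {X : Type*} [TopologicalSpace X]
    [NormalSpace X] (F W : Set (X × ℝ)) (hF : IsCusco F) (hW : IsOpen W) (hFW : F ⊆ W) :
    ∃ g : X → ℝ, Continuous g ∧ graphOf g ⊆ W := by
  let e := orderIsoIooNegOneOne ℝ
  let φ : ℝ → ℝ := fun t => e t
  have hφ : IsOpenEmbedding φ :=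
    isOpen_Ioo.isOpenEmbedding_subtypeVal.comp e.toHomeomorph.isOpenEmbedding
  have hbdd : Bornology.IsBounded (Prod.snd '' (Prod.map id φ '' W)) :=
    Metric.isBounded_Ioo (-1 : ℝ) 1 |>.subset <| by
      rintro _ ⟨_, ⟨p, -, rfl⟩, rfl⟩
      exact (e p.2).2
  obtain ⟨g', hg', hg'W⟩ := exists_continuous_graph_subset_of_isBounded
    (hF.image_prodMap hφ.continuous) ((IsOpenEmbedding.id.prodMap hφ).isOpenMap W hW)
    (image_mono hFW) hbdd
  exact exists_continuous_graph_subset_of_image_prodMap hφ.isEmbedding hg' hg'W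

/-- If `X` is normal Hausdorff, `F` is a cusco map from `X` to `ℝ` and `W` is open with
`graph F ⊆ W`, then some continuous `g : X → ℝ` has its graph contained in `W`. -/
theorem exists_continuous_graph_subset {X : Type*} [TopologicalSpace X] [T2Space X]
    [NormalSpace X] (F W : Set (X × ℝ)) (hF : IsCusco F) (hW : IsOpen W) (hFW : F ⊆ W) :
    ∃ g : X → ℝ, Continuous g ∧ graphOf g ⊆ W :=
  exists_continuous_graph_subset_general F W hF hW hFW
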